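/- Let α : 𝒳 → ℝ be infinitely differentiable, and define functions a_{kr} : 𝒳 → ℝ (k, r ≥ 0) by: a_{00} = α; a_{kr} = 0 unless 0 ≤ r ≤ k; and a_{k+1,r} = α · (a_{kr}′ + a_{k,r−1}). Then for every integer k ≥ 0 and every q-function f: (α D)^k (α · f) = Σ_{r=0}^k (−1)^{k−r} D^r (a_{kr} · f), where α · f and a_{kr} · f denote pointwise multiplication by the function of x, and (α D)^k denotes the k-fold composition of the operator f ↦ α · (D f). Moreover, for all integers m ≥ r + 1 ≥ 1 and every q-function f: Σ_{k=r+1}^m (−1)^{k−1−r} D^{k−1−r}(a_{mk} · f) = Σ_{k=r}^{m−1} (−1)^{m−1−k} a_{kr} · (α D)^{m−1−k}(α · f). -/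

import Mathlib

noncomputable section

/-- The type of candidate local functions: functions of `x` and the jet `(q₀, q₁, …)`. -/
abbrev QFun := ℝ → (ℕ → ℝ) → ℝ

/-- `IsQFunc X m f` : `f` is a q-function of order `m` on `X`: it depends only on
`x, q_0, …, q_m` and is infinitely differentiable for `x ∈ X`, `q_0 > 0`. -/
def IsQFunc (X : Set ℝ) (m : ℕ) (f : QFun) : Prop :=
  ∃ F : ℝ × (Fin (m + 1) → ℝ) → ℝ,
    ContDiffOn ℝ (⊤ : ℕ∞) F {p : ℝ × (Fin (m + 1) → ℝ) | p.1 ∈ X ∧ 0 < p.2 0} ∧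
    ∀ x q, f x q = F (x, fun i => q i.val)

/-- Partial derivative with respect to `x`. -/
def pdx (f : QFun) : QFun := fun x q => deriv (fun t => f t q) x

/-- Partial derivative with respect to `q_j`. -/
def pd (j : ℕ) (f : QFun) : QFun :=
  fun x q => deriv (fun t => f x (Function.update q j t)) (q j)

/-- The total-derivative operator `D f = ∂f/∂x + Σ_j q_{j+1} ∂f/∂q_j`. -/
def Dop (f : QFun) : QFun :=
  fun x q => pdx f x q + ∑' j : ℕ, q (j + 1) * pd j f x q

/-- The Lagrange operator `Λ f = Σ_k (-1)^k D^k (∂f/∂q_k)`. -/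
def Lam (f : QFun) : QFun :=
  fun x q => ∑' k : ℕ, (-1 : ℝ) ^ k * Dop^[k] (pd k f) x q

/-- The operator `L f = Σ_k (-1)^(k+1) D^k (q_0 ∂f/∂q_k)`. -/
def Lop (f : QFun) : QFun :=
  fun x q => ∑' k : ℕ, (-1 : ℝ) ^ (k + 1) * Dop^[k] (fun y p => p 0 * pd k f y p) x q

/-- The Euler operator `E f = Σ_j q_j ∂f/∂q_j`. -/
def Eop (f : QFun) : QFun := fun x q => ∑' j : ℕ, q j * pd j f x q

/-- The operator `B_r f = Σ_{k ≥ r+1} (-1)^(k-1-r) D^(k-1-r) (∂f/∂q_k)`, for `r ≥ -1`. -/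
def Bop (r : ℤ) (f : QFun) : QFun :=
  fun x q => ∑' k : ℕ,
    if r + 1 ≤ (k : ℤ) then
      (-1 : ℝ) ^ ((k : ℤ) - 1 - r).toNat * Dop^[((k : ℤ) - 1 - r).toNat] (pd k f) x q
    else 0

/-- The operator `C f = Σ_{r ≥ 0} q_r B_r f`. -/
def Cop (f : QFun) : QFun := fun x q => ∑' r : ℕ, q r * Bop (r : ℤ) f x q

/-- `f` is homogeneous of degree `h` in `(q_0, q_1, …)`. -/
def IsHomog (X : Set ℝ) (h : ℝ) (f : QFun) : Prop :=
  ∀ x ∈ X, ∀ q : ℕ → ℝ, 0 < q 0 → ∀ l : ℝ, 0 < l →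
    f x (fun j => l * q j) = l ^ h * f x q

/-- `X` is a nonempty open (possibly infinite or semi-infinite) interval of `ℝ`. -/
def IsOpenInterval (X : Set ℝ) : Prop := IsOpen X ∧ X.OrdConnected ∧ X.Nonempty

namespace S19
variable {X : Set ℝ}
def jet (m : ℕ) (q : ℕ → ℝ) : Fin (m+1) → ℝ := fun i => q i.val
abbrev U (X : Set ℝ) (m : ℕ) : Set (ℝ × (Fin (m+1) → ℝ)) := {p | p.1 ∈ X ∧ 0 < p.2 0}
lemma isOpen_U (hXo : IsOpen X) (m : ℕ) : IsOpen (U X m) :=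
  (hXo.preimage continuous_fst).inter
    (isOpen_lt continuous_const ((continuous_apply _).comp continuous_snd))
lemma mem_U {m : ℕ} {x : ℝ} {q : ℕ → ℝ} (hx : x ∈ X) (hq : 0 < q 0) :
    (x, jet m q) ∈ U X m := ⟨hx, hq⟩
lemma jet_update_le {m j : ℕ} (hj : j < m+1) (q : ℕ → ℝ) (t : ℝ) :
    jet m (Function.update q j t) = Function.update (jet m q) ⟨j, hj⟩ t := by
  funext i
  simp only [jet, Function.update_apply, Fin.ext_iff]
lemma jet_update_gt {m j : ℕ} (hj : m+1 ≤ j) (q : ℕ → ℝ) (t : ℝ) :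
    jet m (Function.update q j t) = jet m q := by
  funext i
  exact Function.update_of_ne (by omega) _ _
section rep
variable {m : ℕ} {f : QFun} {F : ℝ × (Fin (m+1) → ℝ) → ℝ}
lemma pd_high (hfF : ∀ x q, f x q = F (x, jet m q)) {j : ℕ} (hj : m+1 ≤ j)
    (x : ℝ) (q : ℕ → ℝ) : pd j f x q = 0 := by
  have h : (fun t => f x (Function.update q j t)) = fun _ => F (x, jet m q) := by
    funext t; rw [hfF, jet_update_gt hj]
  simp only [pd]; rw [h, deriv_const]
lemma pd_rep (hfF : ∀ x q, f x q = F (x, jet m q)) {j : ℕ} (hj : j < m+1)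
    (x : ℝ) (q : ℕ → ℝ) :
    pd j f x q = deriv (fun t => F (x, Function.update (jet m q) ⟨j, hj⟩ t)) (q j) := by
  simp only [pd]
  congr 1
  funext t
  rw [hfF, jet_update_le hj]
lemma pdx_rep (hfF : ∀ x q, f x q = F (x, jet m q)) (x : ℝ) (q : ℕ → ℝ) :
    pdx f x q = deriv (fun t => F (t, jet m q)) x := by
  simp only [pdx]
  congr 1
  funext t
  rw [hfF]
end rep
lemma deriv_update_eq_fderiv {m : ℕ} {F : ℝ × (Fin (m+1) → ℝ) → ℝ}
    {p : ℝ × (Fin (m+1) → ℝ)} (hF : DifferentiableAt ℝ F p) (i : Fin (m+1)) :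
    deriv (fun t => F (p.1, Function.update p.2 i t)) (p.2 i)
      = fderiv ℝ F p ((0 : ℝ), Pi.single i 1) := by
  have hγ : HasDerivAt (fun t => (p.1, Function.update p.2 i t))
      ((0 : ℝ), Pi.single i (1:ℝ)) (p.2 i) :=
    (hasDerivAt_const _ _).prodMk (hasDerivAt_update _ _ _)
  have hF' : HasFDerivAt F (fderiv ℝ F p)
      ((fun t => (p.1, Function.update p.2 i t)) (p.2 i)) := by
    simpa [Function.update_eq_self] using hF.hasFDerivAt
  exact (hF'.comp_hasDerivAt _ hγ).deriv
lemma deriv_x_eq_fderiv {m : ℕ} {F : ℝ × (Fin (m+1) → ℝ) → ℝ}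
    {p : ℝ × (Fin (m+1) → ℝ)} (hF : DifferentiableAt ℝ F p) :
    deriv (fun t => F (t, p.2)) p.1 = fderiv ℝ F p ((1 : ℝ), 0) := by
  have hγ : HasDerivAt (fun t : ℝ => (t, p.2)) ((1 : ℝ), (0 : Fin (m+1) → ℝ)) p.1 :=
    (hasDerivAt_id _).prodMk (hasDerivAt_const _ _)
  have hF' : HasFDerivAt F (fderiv ℝ F p) ((fun t : ℝ => (t, p.2)) p.1) := hF.hasFDerivAt
  exact (hF'.comp_hasDerivAt _ hγ).deriv
--------------- new chunk: closure under pdx, pd, Dop; differentiability; Dop_eq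

lemma diffAt_of_contDiffOn_U {m : ℕ} {F : ℝ × (Fin (m+1) → ℝ) → ℝ} (hXo : IsOpen X)
    (hF : ContDiffOn ℝ (⊤ : ℕ∞) F (U X m)) {p : ℝ × (Fin (m+1) → ℝ)} (hp : p ∈ U X m) :
    DifferentiableAt ℝ F p :=
  (hF.contDiffAt ((isOpen_U hXo m).mem_nhds hp)).differentiableAt (by simp)

lemma qf_pdx (hXo : IsOpen X) {m : ℕ} {f : QFun} (hf : IsQFunc X m f) :
    IsQFunc X m (pdx f) := by
  obtain ⟨F, hF, hfF⟩ := hf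
  refine ⟨fun p => deriv (fun t => F (t, p.2)) p.1, ?_, fun x q => pdx_rep hfF x q⟩
  have h1 : ContDiffOn ℝ (⊤ : ℕ∞) (fun p : ℝ × (Fin (m+1) → ℝ) => fderiv ℝ F p ((1:ℝ), 0)) (U X m) :=
    (hF.fderiv_of_isOpen (isOpen_U hXo m) (by simp)).clm_apply contDiffOn_const
  exact h1.congr fun p hp => deriv_x_eq_fderiv (diffAt_of_contDiffOn_U hXo hF hp)

lemma qf_pd (hXo : IsOpen X) {m : ℕ} {f : QFun} (hf : IsQFunc X m f) (j : ℕ) :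
    IsQFunc X m (pd j f) := by
  obtain ⟨F, hF, hfF⟩ := hf
  rcases lt_or_ge j (m+1) with hj | hj
  · refine ⟨fun p => deriv (fun t => F (p.1, Function.update p.2 ⟨j, hj⟩ t)) (p.2 ⟨j, hj⟩),
      ?_, fun x q => pd_rep hfF hj x q⟩
    have h1 : ContDiffOn ℝ (⊤ : ℕ∞)
        (fun p : ℝ × (Fin (m+1) → ℝ) => fderiv ℝ F p ((0:ℝ), Pi.single ⟨j, hj⟩ 1)) (U X m) :=
      (hF.fderiv_of_isOpen (isOpen_U hXo m) (by simp)).clm_apply contDiffOn_const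
    exact h1.congr fun p hp => deriv_update_eq_fderiv (diffAt_of_contDiffOn_U hXo hF hp) _
  · exact ⟨fun _ => 0, contDiffOn_const, fun x q => pd_high hfF hj x q⟩

lemma Dop_eq {m : ℕ} {f : QFun} (hf : IsQFunc X m f) (x : ℝ) (q : ℕ → ℝ) :
    Dop f x q = pdx f x q + ∑ j ∈ Finset.range (m+1), q (j+1) * pd j f x q := by
  obtain ⟨F, hF, hfF⟩ := hf
  simp only [Dop]
  congr 1
  refine tsum_eq_sum fun j hj => ?_
  rw [pd_high hfF (by simpa using Finset.mem_range.not.mp hj), mul_zero]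

lemma diffAt_x (hXo : IsOpen X) {m : ℕ} {f : QFun} (hf : IsQFunc X m f)
    {x : ℝ} {q : ℕ → ℝ} (hx : x ∈ X) (hq : 0 < q 0) :
    DifferentiableAt ℝ (fun t => f t q) x := by
  obtain ⟨F, hF, hfF⟩ := hf
  have hd : DifferentiableAt ℝ F (x, jet m q) :=
    diffAt_of_contDiffOn_U hXo hF (mem_U hx hq)
  have h : (fun t => f t q) = fun t => F (t, jet m q) := funext fun t => hfF t q
  rw [h]
  exact hd.comp x (differentiableAt_fun_id.prodMk (differentiableAt_const _))

lemma diffAt_q (hXo : IsOpen X) {m : ℕ} {f : QFun} (hf : IsQFunc X m f)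
    {x : ℝ} {q : ℕ → ℝ} (hx : x ∈ X) (hq : 0 < q 0) (j : ℕ) :
    DifferentiableAt ℝ (fun t => f x (Function.update q j t)) (q j) := by
  obtain ⟨F, hF, hfF⟩ := hf
  rcases lt_or_ge j (m+1) with hj | hj
  · have heq : (fun t => f x (Function.update q j t))
        = fun t => F (x, Function.update (jet m q) ⟨j, hj⟩ t) := by
      funext t; rw [hfF]
      exact congrArg (fun v => F (x, v)) (jet_update_le hj q t)
    rw [heq]
    have hd : DifferentiableAt ℝ F (x, jet m q) :=
      diffAt_of_contDiffOn_U hXo hF (mem_U hx hq)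
    have hγ : DifferentiableAt ℝ
        (fun t => ((x : ℝ), Function.update (jet m q) ⟨j, hj⟩ t)) (q j) :=
      (differentiableAt_const _).prodMk (hasDerivAt_update _ _ _).differentiableAt
    have hd' : DifferentiableAt ℝ F
        ((fun t => ((x : ℝ), Function.update (jet m q) ⟨j, hj⟩ t)) (q j)) := by
      have : Function.update (jet m q) ⟨j, hj⟩ (q j) = jet m q := by
        exact Function.update_eq_self _ _
      simpa [this] using hd
    exact hd'.comp (q j) hγ
  · have heq : (fun t => f x (Function.update q j t)) = fun _ => F (x, jet m q) := by
      funext t; rw [hfF]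
      exact congrArg (fun v => F (x, v)) (jet_update_gt hj q t)
    rw [heq]
    exact differentiableAt_const _

def Eq2 (X : Set ℝ) (f g : QFun) : Prop := ∀ x ∈ X, ∀ q : ℕ → ℝ, 0 < q 0 → f x q = g x q

lemma qf_mono {m m' : ℕ} {f : QFun} (h : m ≤ m') (hf : IsQFunc X m f) : IsQFunc X m' f := by
  obtain ⟨F, hF, hfF⟩ := hf
  have hle : m + 1 ≤ m' + 1 := by omega
  have hmap : ContDiff ℝ (⊤ : ℕ∞) (fun p : ℝ × (Fin (m'+1) → ℝ) =>
      (p.1, fun i : Fin (m+1) => p.2 (Fin.castLE hle i))) := by fun_prop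
  refine ⟨fun p => F (p.1, fun i => p.2 (Fin.castLE hle i)), hF.comp hmap.contDiffOn ?_, ?_⟩
  · rintro p ⟨hp1, hp2⟩
    refine ⟨hp1, ?_⟩
    simpa [Fin.castLE] using hp2
  · intro x q
    rw [hfF]
    rfl

lemma qf_mul {m : ℕ} {f g : QFun} (hf : IsQFunc X m f) (hg : IsQFunc X m g) :
    IsQFunc X m (fun x q => f x q * g x q) := by
  obtain ⟨F, hF, hfF⟩ := hf; obtain ⟨G, hG, hgF⟩ := hg
  exact ⟨fun p => F p * G p, hF.mul hG, fun x q => by simp only [← hfF, ← hgF]⟩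

lemma qf_add {m : ℕ} {f g : QFun} (hf : IsQFunc X m f) (hg : IsQFunc X m g) :
    IsQFunc X m (fun x q => f x q + g x q) := by
  obtain ⟨F, hF, hfF⟩ := hf; obtain ⟨G, hG, hgF⟩ := hg
  exact ⟨fun p => F p + G p, hF.add hG, fun x q => by simp only [← hfF, ← hgF]⟩

lemma isQFunc_const (m : ℕ) (c : ℝ) : IsQFunc X m (fun _ _ => c) :=
  ⟨fun _ => c, contDiffOn_const, fun _ _ => rfl⟩

lemma isQFunc_xfun {m : ℕ} {c : ℝ → ℝ} (hc : ContDiffOn ℝ (⊤ : ℕ∞) c X) :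
    IsQFunc X m (fun x (_ : ℕ → ℝ) => c x) :=
  ⟨fun p => c p.1, hc.comp contDiffOn_fst (fun _ hp => hp.1), fun _ _ => rfl⟩

lemma isQFunc_xmul {m : ℕ} {c : ℝ → ℝ} {f : QFun} (hc : ContDiffOn ℝ (⊤ : ℕ∞) c X)
    (hf : IsQFunc X m f) : IsQFunc X m (fun x q => c x * f x q) :=
  qf_mul (isQFunc_xfun hc) hf

lemma isQFunc_coord (j : ℕ) : IsQFunc X j (fun _ q => q j) :=
  ⟨fun p => p.2 ⟨j, by omega⟩, by fun_prop, fun _ _ => rfl⟩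

lemma qf_finsum {ι : Type} (s : Finset ι) (m : ℕ) (g : ι → QFun)
    (hg : ∀ i ∈ s, IsQFunc X m (g i)) :
    IsQFunc X m (fun x q => ∑ i ∈ s, g i x q) := by
  classical
  induction s using Finset.cons_induction with
  | empty => simpa using isQFunc_const m 0
  | cons i s his ih =>
    have h2 := qf_add (hg i (Finset.mem_cons_self i s))
      (ih (fun j hj => hg j (Finset.mem_cons_of_mem hj)))
    have heq : (fun x q => ∑ j ∈ Finset.cons i s his, g j x q)
        = fun x q => g i x q + ∑ j ∈ s, g j x q := by
      funext x q; rw [Finset.sum_cons]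
    rw [heq]; exact h2

lemma qf_dop (hXo : IsOpen X) {m : ℕ} {f : QFun} (hf : IsQFunc X m f) :
    IsQFunc X (m+1) (Dop f) := by
  have h : Dop f = fun x q => pdx f x q + ∑ j ∈ Finset.range (m+1), q (j+1) * pd j f x q :=
    funext fun x => funext fun q => Dop_eq hf x q
  rw [h]
  refine qf_add (qf_mono (by omega) (qf_pdx hXo hf)) ?_
  refine qf_finsum _ _ _ (fun j hj => ?_)
  exact qf_mul (qf_mono (by have := Finset.mem_range.mp hj; omega) (isQFunc_coord (j+1)))
    (qf_mono (by omega) (qf_pd hXo hf j))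

lemma Dop_congr (hXo : IsOpen X) {f g : QFun} (h : Eq2 X f g) : Eq2 X (Dop f) (Dop g) := by
  intro x hx q hq
  simp only [Dop]
  have hx' : pdx f x q = pdx g x q := by
    simp only [pdx]
    apply Filter.EventuallyEq.deriv_eq
    filter_upwards [hXo.mem_nhds hx] with t ht
    exact h t ht q hq
  rw [hx']
  congr 1
  refine tsum_congr fun j => ?_
  congr 1
  simp only [pd]
  apply Filter.EventuallyEq.deriv_eq
  rcases Nat.eq_zero_or_pos j with rfl | hj
  · filter_upwards [isOpen_Ioi.mem_nhds hq] with t ht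
    exact h x hx _ (by simpa using (ht : (0:ℝ) < t))
  · filter_upwards [Filter.univ_mem] with t _
    exact h x hx _ (by rwa [Function.update_of_ne (by omega)])

lemma Dop_zero : ∀ x q, Dop (fun (_ : ℝ) (_ : ℕ → ℝ) => (0:ℝ)) x q = 0 := by
  intro x q
  simp [Dop, pdx, pd]

lemma Dop_cmul (c : ℝ) (f : QFun) : ∀ x q, Dop (fun y p => c * f y p) x q = c * Dop f x q := by
  intro x q
  simp only [Dop, pdx, pd]
  have h1 : deriv (fun t => c * f t q) x = c * deriv (fun t => f t q) x :=
    deriv_const_mul_field c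
  have h3 : ∑' (j:ℕ), q (j+1) * deriv (fun t => c * f x (Function.update q j t)) (q j)
      = c * ∑' (j:ℕ), q (j+1) * deriv (fun t => f x (Function.update q j t)) (q j) := by
    rw [← tsum_mul_left]
    exact tsum_congr fun j => by rw [deriv_const_mul_field c]; ring
  rw [h1, h3]; ring

lemma Dop_xmul (hXo : IsOpen X) {c : ℝ → ℝ} (hc : ContDiffOn ℝ (⊤ : ℕ∞) c X) {m : ℕ} {f : QFun}
    (hf : IsQFunc X m f) : ∀ x ∈ X, ∀ q : ℕ → ℝ, 0 < q 0 →
    Dop (fun y p => c y * f y p) x q = deriv c x * f x q + c x * Dop f x q := by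
  intro x hx q hq
  have hcd : DifferentiableAt ℝ c x := (hc.contDiffAt (hXo.mem_nhds hx)).differentiableAt (by simp)
  simp only [Dop, pdx, pd]
  have h1 : deriv (fun t => c t * f t q) x
      = deriv c x * f x q + c x * deriv (fun t => f t q) x :=
    deriv_mul hcd (diffAt_x hXo hf hx hq)
  have h3 : ∑' (j:ℕ), q (j+1) * deriv (fun t => c x * f x (Function.update q j t)) (q j)
      = c x * ∑' (j:ℕ), q (j+1) * deriv (fun t => f x (Function.update q j t)) (q j) := by
    rw [← tsum_mul_left]
    exact tsum_congr fun j => by rw [deriv_const_mul_field (c x)]; ring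
  rw [h1, h3]; ring

lemma Dop_add (hXo : IsOpen X) {m : ℕ} {f g : QFun} (hf : IsQFunc X m f) (hg : IsQFunc X m g) :
    ∀ x ∈ X, ∀ q : ℕ → ℝ, 0 < q 0 →
    Dop (fun y p => f y p + g y p) x q = Dop f x q + Dop g x q := by
  intro x hx q hq
  have hfg : IsQFunc X m (fun y p => f y p + g y p) := qf_add hf hg
  rw [Dop_eq hfg x q, Dop_eq hf x q, Dop_eq hg x q]
  have h1 : pdx (fun y p => f y p + g y p) x q = pdx f x q + pdx g x q := by
    simp only [pdx]
    exact deriv_add (diffAt_x hXo hf hx hq) (diffAt_x hXo hg hx hq)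
  have h2 : ∑ j ∈ Finset.range (m+1), q (j+1) * pd j (fun y p => f y p + g y p) x q
      = ∑ j ∈ Finset.range (m+1), (q (j+1) * pd j f x q + q (j+1) * pd j g x q) := by
    refine Finset.sum_congr rfl fun j _ => ?_
    have : pd j (fun y p => f y p + g y p) x q = pd j f x q + pd j g x q := by
      simp only [pd]
      exact deriv_add (diffAt_q hXo hf hx hq j) (diffAt_q hXo hg hx hq j)
    rw [this]; ring
  rw [h1, h2, Finset.sum_add_distrib]; ring

lemma qf_lincomb {ι : Type} (s : Finset ι) (c : ι → ℝ) (g : ι → QFun)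
    (hg : ∀ i ∈ s, ∃ m, IsQFunc X m (g i)) :
    ∃ m, IsQFunc X m (fun x q => ∑ i ∈ s, c i * g i x q) := by
  classical
  induction s using Finset.cons_induction with
  | empty => exact ⟨0, by simpa using isQFunc_const 0 0⟩
  | cons i s his ih =>
    obtain ⟨m1, h1⟩ := hg i (Finset.mem_cons_self i s)
    obtain ⟨m2, h2⟩ := ih (fun j hj => hg j (Finset.mem_cons_of_mem hj))
    refine ⟨max m1 m2, ?_⟩
    have h3 := qf_add (qf_mul (isQFunc_const (max m1 m2) (c i)) (qf_mono (le_max_left _ _) h1))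
      (qf_mono (le_max_right _ _) h2)
    have heq : (fun x q => ∑ j ∈ Finset.cons i s his, c j * g j x q)
        = fun x q => c i * g i x q + ∑ j ∈ s, c j * g j x q := by
      funext x q; rw [Finset.sum_cons]
    rw [heq]; exact h3

lemma Dop_sum (hXo : IsOpen X) {ι : Type} (s : Finset ι) (c : ι → ℝ) (g : ι → QFun)
    (hg : ∀ i ∈ s, ∃ m, IsQFunc X m (g i)) :
    ∀ x ∈ X, ∀ q : ℕ → ℝ, 0 < q 0 →
    Dop (fun y p => ∑ i ∈ s, c i * g i y p) x q = ∑ i ∈ s, c i * Dop (g i) x q := by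
  classical
  induction s using Finset.cons_induction with
  | empty => intro x hx q hq; simpa using Dop_zero x q
  | cons i s his ih =>
    intro x hx q hq
    obtain ⟨m1, h1⟩ := hg i (Finset.mem_cons_self i s)
    obtain ⟨m2, h2⟩ := qf_lincomb s c g (fun j hj => hg j (Finset.mem_cons_of_mem hj))
    have heq : (fun y p => ∑ j ∈ Finset.cons i s his, c j * g j y p)
        = fun y p => (fun y p => c i * g i y p) y p + (fun y p => ∑ j ∈ s, c j * g j y p) y p := by
      funext y p; rw [Finset.sum_cons]
    rw [heq, Finset.sum_cons]
    rw [Dop_add hXo (qf_mono (le_max_left m1 m2) (qf_mul (isQFunc_const m1 (c i)) h1))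
      (qf_mono (le_max_right m1 m2) h2) x hx q hq]
    rw [Dop_cmul (c i) (g i) x q]
    rw [ih (fun j hj => hg j (Finset.mem_cons_of_mem hj)) x hx q hq]

lemma Dop_iter_congr (hXo : IsOpen X) (t : ℕ) {f g : QFun} (h : Eq2 X f g) :
    Eq2 X (Dop^[t] f) (Dop^[t] g) := by
  induction t generalizing f g with
  | zero => exact h
  | succ t ih =>
    rw [Function.iterate_succ_apply, Function.iterate_succ_apply]
    exact ih (Dop_congr hXo h)

lemma qf_dop_ex (hXo : IsOpen X) {f : QFun} (hf : ∃ m, IsQFunc X m f) :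
    ∃ m, IsQFunc X m (Dop f) := by
  obtain ⟨m, hm⟩ := hf; exact ⟨m+1, qf_dop hXo hm⟩

lemma qf_iter (hXo : IsOpen X) (t : ℕ) {f : QFun} (hf : ∃ m, IsQFunc X m f) :
    ∃ m, IsQFunc X m (Dop^[t] f) := by
  induction t with
  | zero => exact hf
  | succ t ih => rw [Function.iterate_succ_apply']; exact qf_dop_ex hXo ih

lemma Dop_iter_sum (hXo : IsOpen X) {ι : Type} (t : ℕ) (s : Finset ι) (c : ι → ℝ)
    (g : ι → QFun) (hg : ∀ i ∈ s, ∃ m, IsQFunc X m (g i)) :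
    Eq2 X (Dop^[t] (fun y p => ∑ i ∈ s, c i * g i y p))
      (fun x q => ∑ i ∈ s, c i * Dop^[t] (g i) x q) := by
  induction t generalizing g with
  | zero => intro x hx q hq; rfl
  | succ t ih =>
    intro x hx q hq
    rw [Function.iterate_succ_apply]
    have h1 : Eq2 X (Dop (fun y p => ∑ i ∈ s, c i * g i y p))
        (fun x q => ∑ i ∈ s, c i * Dop (g i) x q) := fun x hx q hq =>
      Dop_sum hXo s c g hg x hx q hq
    rw [Dop_iter_congr hXo t h1 x hx q hq]
    exact ih (g := fun i => Dop (g i)) (fun i hi => qf_dop_ex hXo (hg i hi)) x hx q hq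

lemma Dop_lin2 (hXo : IsOpen X) (a b : ℝ) {u v : QFun} (hu : ∃ m, IsQFunc X m u)
    (hv : ∃ m, IsQFunc X m v) :
    ∀ x ∈ X, ∀ q : ℕ → ℝ, 0 < q 0 →
    Dop (fun y p => a * u y p + b * v y p) x q = a * Dop u x q + b * Dop v x q := by
  intro x hx q hq
  obtain ⟨m1, h1⟩ := hu; obtain ⟨m2, h2⟩ := hv
  have ha : IsQFunc X (max m1 m2) (fun y p => a * u y p) :=
    qf_mul (isQFunc_const _ a) (qf_mono (le_max_left _ _) h1)
  have hb : IsQFunc X (max m1 m2) (fun y p => b * v y p) :=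
    qf_mul (isQFunc_const _ b) (qf_mono (le_max_right _ _) h2)
  rw [Dop_add hXo ha hb x hx q hq, Dop_cmul a u x q, Dop_cmul b v x q]

lemma Dop_iter_lin2 (hXo : IsOpen X) (t : ℕ) (a b : ℝ) {u v : QFun}
    (hu : ∃ m, IsQFunc X m u) (hv : ∃ m, IsQFunc X m v) :
    Eq2 X (Dop^[t] (fun y p => a * u y p + b * v y p))
      (fun x q => a * Dop^[t] u x q + b * Dop^[t] v x q) := by
  induction t generalizing u v with
  | zero => intro x hx q hq; rfl
  | succ t ih =>
    intro x hx q hq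
    rw [Function.iterate_succ_apply]
    have h1 : Eq2 X (Dop (fun y p => a * u y p + b * v y p))
        (fun x q => a * Dop u x q + b * Dop v x q) := Dop_lin2 hXo a b hu hv
    rw [Dop_iter_congr hXo t h1 x hx q hq]
    exact ih (qf_dop_ex hXo hu) (qf_dop_ex hXo hv) x hx q hq


def bcoef (α : ℝ → ℝ) : ℕ → ℤ → ℝ → ℝ
  | 0, r => if r = 0 then α else fun _ => 0
  | (k+1), r => fun x => α x * (deriv (bcoef α k r) x + bcoef α k (r-1) x)

lemma bcoef_zero (α : ℝ → ℝ) : ∀ (k : ℕ) (r : ℤ), ¬ (0 ≤ r ∧ r ≤ (k:ℤ)) →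
    bcoef α k r = fun _ => 0 := by
  intro k
  induction k with
  | zero =>
    intro r hr
    have h : r ≠ 0 := by simp at hr; omega
    simp [bcoef, h]
  | succ k ih =>
    intro r hr
    have h1 : bcoef α k r = fun _ => 0 := ih r (by push_cast at hr ⊢; omega)
    have h2 : bcoef α k (r-1) = fun _ => 0 := ih (r-1) (by push_cast at hr ⊢; omega)
    funext x
    simp [bcoef, h1, h2]

lemma bcoef_contDiffOn (hXo : IsOpen X) {α : ℝ → ℝ} (hα : ContDiffOn ℝ (⊤ : ℕ∞) α X) :
    ∀ (k : ℕ) (r : ℤ), ContDiffOn ℝ (⊤ : ℕ∞) (bcoef α k r) X := by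
  intro k
  induction k with
  | zero =>
    intro r
    by_cases h : r = 0
    · simpa [bcoef, h] using hα
    · simp [bcoef, h]
      exact contDiffOn_const
  | succ k ih =>
    intro r
    show ContDiffOn ℝ (⊤ : ℕ∞) (fun x => α x * (deriv (bcoef α k r) x + bcoef α k (r-1) x)) X
    exact hα.mul (((ih r).deriv_of_isOpen hXo (by simp)).add (ih (r-1)))

lemma iterderiv_contDiffOn (hXo : IsOpen X) {c : ℝ → ℝ} (hc : ContDiffOn ℝ (⊤ : ℕ∞) c X) :
    ∀ u : ℕ, ContDiffOn ℝ (⊤ : ℕ∞) (deriv^[u] c) X := by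
  intro u
  induction u with
  | zero => exact hc
  | succ u ih => rw [Function.iterate_succ_apply']; exact ih.deriv_of_isOpen hXo (by simp)

lemma diffAt_c (hXo : IsOpen X) {c : ℝ → ℝ} (hc : ContDiffOn ℝ (⊤ : ℕ∞) c X) {x : ℝ} (hx : x ∈ X) :
    DifferentiableAt ℝ c x := (hc.contDiffAt (hXo.mem_nhds hx)).differentiableAt (by simp)

lemma coeff_identity (hXo : IsOpen X) {α : ℝ → ℝ} (hα : ContDiffOn ℝ (⊤ : ℕ∞) α X) :
    ∀ (k t : ℕ), ∀ x ∈ X, bcoef α (k+1) (t:ℤ) x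
      = ∑ r ∈ Finset.range (k+1),
          (((r+1).choose t : ℝ)) * (deriv^[r+1-t] α x * bcoef α k (r:ℤ) x) := by
  intro k
  induction k with
  | zero =>
    intro t x hx
    show α x * (deriv (bcoef α 0 (t:ℤ)) x + bcoef α 0 ((t:ℤ)-1) x) = _
    rw [Finset.sum_range_one]
    match t with
    | 0 =>
      have h1 : bcoef α 0 ((0:ℕ):ℤ) = α := by simp [bcoef]
      have h2 : bcoef α 0 (((0:ℕ):ℤ)-1) = fun _ => 0 := bcoef_zero α 0 _ (by omega)
      rw [h1, h2]
      simp [Function.iterate_one]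
      ring
    | 1 =>
      have h1 : bcoef α 0 ((1:ℕ):ℤ) = fun _ => 0 := bcoef_zero α 0 _ (by omega)
      have h2 : bcoef α 0 (((1:ℕ):ℤ)-1) = α := by norm_num [bcoef]
      have h3 : bcoef α 0 ((0:ℕ):ℤ) = α := by simp [bcoef]
      rw [h1, h2, h3]
      simp
    | (t+2) =>
      have h1 : bcoef α 0 (((t+2:ℕ)):ℤ) = fun _ => 0 := bcoef_zero α 0 _ (by push_cast; omega)
      have h2 : bcoef α 0 ((((t+2:ℕ)):ℤ)-1) = fun _ => 0 := bcoef_zero α 0 _ (by push_cast; omega)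
      have h3 : (1).choose (t+2) = 0 := Nat.choose_eq_zero_of_lt (by omega)
      rw [h1, h2, h3]
      simp
  | succ k ih =>
    intro t x hx
    show α x * (deriv (bcoef α (k+1) (t:ℤ)) x + bcoef α (k+1) ((t:ℤ)-1) x) = _
    -- rewrite the derivative using IH
    have hder : deriv (bcoef α (k+1) (t:ℤ)) x
        = ∑ r ∈ Finset.range (k+1), ((r+1).choose t : ℝ) *
            (deriv^[r+1-t+1] α x * bcoef α k (r:ℤ) x
              + deriv^[r+1-t] α x * deriv (bcoef α k (r:ℤ)) x) := by
      have he : deriv (bcoef α (k+1) (t:ℤ)) x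
          = deriv (fun y => ∑ r ∈ Finset.range (k+1),
              ((r+1).choose t : ℝ) * (deriv^[r+1-t] α y * bcoef α k (r:ℤ) y)) x := by
        apply Filter.EventuallyEq.deriv_eq
        filter_upwards [hXo.mem_nhds hx] with y hy
        exact ih t y hy
      rw [he]
      rw [deriv_fun_sum (fun r _ => (((iterderiv_contDiffOn hXo hα (r+1-t)).mul
        (bcoef_contDiffOn hXo hα k (r:ℤ))).differentiableOn (by simp) |>.differentiableAt
          (hXo.mem_nhds hx)).const_mul _)]
      refine Finset.sum_congr rfl fun r _ => ?_
      rw [deriv_const_mul_field]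
      rw [deriv_fun_mul (diffAt_c hXo (iterderiv_contDiffOn hXo hα (r+1-t)) hx)
        (diffAt_c hXo (bcoef_contDiffOn hXo hα k (r:ℤ)) hx)]
      rw [← Function.iterate_succ_apply' deriv (r+1-t) α]
    rw [hder]
    -- expand RHS
    have hrhs : ∀ r ∈ Finset.range (k+2), ((r+1).choose t : ℝ) *
        (deriv^[r+1-t] α x * bcoef α (k+1) (r:ℤ) x)
        = ((r+1).choose t : ℝ) * (deriv^[r+1-t] α x *
            (α x * (deriv (bcoef α k (r:ℤ)) x + bcoef α k ((r:ℤ)-1) x))) := fun r _ => rfl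
    rw [Finset.sum_congr rfl hrhs]
    have hRHS : ∑ r ∈ Finset.range (k+2), ((r+1).choose t : ℝ) *
        (deriv^[r+1-t] α x * (α x * (deriv (bcoef α k (r:ℤ)) x + bcoef α k ((r:ℤ)-1) x)))
      = α x * ((∑ r ∈ Finset.range (k+2), ((r+1).choose t : ℝ) *
            (deriv^[r+1-t] α x * deriv (bcoef α k (r:ℤ)) x))
          + ∑ r ∈ Finset.range (k+2), ((r+1).choose t : ℝ) *
            (deriv^[r+1-t] α x * bcoef α k ((r:ℤ)-1) x)) := by
      rw [mul_add, Finset.mul_sum, Finset.mul_sum, ← Finset.sum_add_distrib]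
      exact Finset.sum_congr rfl fun r _ => by ring
    rw [hRHS]
    have h1 : (∑ r ∈ Finset.range (k+2), ((r+1).choose t : ℝ) *
          (deriv^[r+1-t] α x * deriv (bcoef α k (r:ℤ)) x))
        = ∑ r ∈ Finset.range (k+1), ((r+1).choose t : ℝ) *
            (deriv^[r+1-t] α x * deriv (bcoef α k (r:ℤ)) x) := by
      rw [Finset.sum_range_succ]
      have hz : deriv (bcoef α k ((k+1 : ℕ):ℤ)) x = 0 := by
        rw [bcoef_zero α k _ (by push_cast; omega)]; simp
      rw [hz]; ring
    have h2 : (∑ r ∈ Finset.range (k+2), ((r+1).choose t : ℝ) *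
          (deriv^[r+1-t] α x * bcoef α k ((r:ℤ)-1) x))
        = ∑ r ∈ Finset.range (k+1), ((r+2).choose t : ℝ) *
            (deriv^[r+2-t] α x * bcoef α k (r:ℤ) x) := by
      rw [Finset.sum_range_succ']
      have hterm : ∀ r ∈ Finset.range (k+1), ((r+1+1).choose t : ℝ) *
          (deriv^[r+1+1-t] α x * bcoef α k ((↑(r+1):ℤ)-1) x)
          = ((r+2).choose t : ℝ) * (deriv^[r+2-t] α x * bcoef α k (r:ℤ) x) := by
        intro r _
        have hc : ((r+1:ℕ):ℤ) - 1 = (r:ℤ) := by push_cast; ring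
        rw [hc]
      rw [Finset.sum_congr rfl hterm]
      have h0 : bcoef α k ((↑(0:ℕ):ℤ)-1) x = 0 := by
        rw [bcoef_zero α k _ (by omega)]
      rw [h0]
      ring
    rw [h1, h2]
    rcases t with _ | t'
    · have hE : bcoef α (k+1) ((↑(0:ℕ):ℤ)-1) x = 0 := by
        rw [bcoef_zero α (k+1) _ (by omega)]
      rw [hE, add_zero, ← Finset.sum_add_distrib]
      rw [Finset.mul_sum, Finset.mul_sum]
      refine Finset.sum_congr rfl fun r _ => ?_
      simp only [Nat.sub_zero, Nat.choose_zero_right, Nat.cast_one]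
      ring
    · have hcast : ((t'+1:ℕ):ℤ) - 1 = ((t':ℕ) : ℤ) := by push_cast; ring
      rw [hcast, ih t' x hx]
      rw [← Finset.sum_add_distrib, ← Finset.sum_add_distrib]
      rw [Finset.mul_sum, Finset.mul_sum]
      refine Finset.sum_congr rfl fun r _ => ?_
      simp only [Nat.succ_sub_succ_eq_sub]
      have hp : ((r+2).choose (t'+1) : ℝ) = (r+1).choose t' + (r+1).choose (t'+1) := by
        rw [show r+2 = (r+1)+1 from rfl, Nat.choose_succ_succ]
        push_cast; ring
      rcases le_or_gt t' r with h | h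
      · rw [show r - t' + 1 = r + 1 - t' from by omega, hp]
        ring
      · have hz : (r+1).choose (t'+1) = 0 := Nat.choose_eq_zero_of_lt (by omega)
        rw [hp, hz]
        push_cast
        ring


lemma sum_pascal_aux (s : ℕ) (P Q : ℕ → ℝ) (hPQ : ∀ u, P (u+1) = Q u) :
    ∑ u ∈ Finset.range (s+1+1), (-1:ℝ)^u * (((s+1).choose u : ℕ) : ℝ) * P u
      = ∑ u ∈ Finset.range (s+1), (-1:ℝ)^u * ((s.choose u : ℕ) : ℝ) * (P u - Q u) := by
  have h1 : ∀ u ∈ Finset.range (s+1), (-1:ℝ)^(u+1) * (((s+1).choose (u+1) : ℕ) : ℝ) * P (u+1)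
      = -((-1:ℝ)^u * ((s.choose u : ℕ) : ℝ) * Q u)
        + (-1:ℝ)^(u+1) * ((s.choose (u+1) : ℕ) : ℝ) * Q u := by
    intro u hu
    rw [hPQ u, Nat.choose_succ_succ]
    push_cast
    ring
  conv_lhs => rw [Finset.sum_range_succ']
  rw [Finset.sum_congr rfl h1, Finset.sum_add_distrib]
  have h2 : ∑ u ∈ Finset.range (s+2), (-1:ℝ)^u * ((s.choose u : ℕ) : ℝ) * P u
      = ∑ u ∈ Finset.range (s+1), (-1:ℝ)^(u+1) * ((s.choose (u+1) : ℕ) : ℝ) * Q u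
        + (-1:ℝ)^0 * (((s+1).choose 0 : ℕ) : ℝ) * P 0 := by
    rw [Finset.sum_range_succ']
    congr 1
    · exact Finset.sum_congr rfl fun u _ => by rw [hPQ u]
    · norm_num
  have e1 : ∑ u ∈ Finset.range (s+2), (-1:ℝ)^u * ((s.choose u : ℕ) : ℝ) * P u
      = ∑ u ∈ Finset.range (s+1), (-1:ℝ)^u * ((s.choose u : ℕ) : ℝ) * P u := by
    rw [Finset.sum_range_succ, Nat.choose_succ_self]
    simp
  have h4 : ∑ u ∈ Finset.range (s+1), (-1:ℝ)^u * ((s.choose u : ℕ) : ℝ) * (P u - Q u)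
      = ∑ u ∈ Finset.range (s+1), (-1:ℝ)^u * ((s.choose u : ℕ) : ℝ) * P u
        - ∑ u ∈ Finset.range (s+1), (-1:ℝ)^u * ((s.choose u : ℕ) : ℝ) * Q u := by
    rw [← Finset.sum_sub_distrib]
    exact Finset.sum_congr rfl fun u _ => by ring
  have h6 : ∑ u ∈ Finset.range (s+1), -((-1:ℝ)^u * ((s.choose u : ℕ) : ℝ) * Q u)
      = - ∑ u ∈ Finset.range (s+1), (-1:ℝ)^u * ((s.choose u : ℕ) : ℝ) * Q u :=
    Finset.sum_neg_distrib _
  linarith [h2, e1, h4, h6]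

lemma inv_leibniz (hXo : IsOpen X) {c : ℝ → ℝ} (hc : ContDiffOn ℝ (⊤ : ℕ∞) c X) (s : ℕ) :
    ∀ {g : QFun}, (∃ m, IsQFunc X m g) → ∀ x ∈ X, ∀ q : ℕ → ℝ, 0 < q 0 →
    c x * Dop^[s] g x q = ∑ u ∈ Finset.range (s+1),
      ((-1:ℝ)^u * ((s.choose u : ℕ) : ℝ)) * Dop^[s-u] (fun y p => deriv^[u] c y * g y p) x q := by
  induction s with
  | zero =>
    intro g hg x hx q hq
    simp
  | succ s ih =>
    intro g hg x hx q hq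
    obtain ⟨m, hm⟩ := hg
    rw [Function.iterate_succ_apply]
    rw [ih ⟨m+1, qf_dop hXo hm⟩ x hx q hq]
    have hterm : ∀ u ∈ Finset.range (s+1),
        ((-1:ℝ)^u * ((s.choose u : ℕ) : ℝ)) *
          Dop^[s-u] (fun y p => deriv^[u] c y * Dop g y p) x q
        = ((-1:ℝ)^u * ((s.choose u : ℕ) : ℝ)) *
            (Dop^[s+1-u] (fun y p => deriv^[u] c y * g y p) x q
              - Dop^[s-u] (fun y p => deriv^[u+1] c y * g y p) x q) := by
      intro u hu
      have hcu := iterderiv_contDiffOn hXo hc u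
      have hQ1 : ∃ m', IsQFunc X m' (Dop (fun y p => deriv^[u] c y * g y p)) :=
        qf_dop_ex hXo ⟨m, isQFunc_xmul hcu hm⟩
      have hQ2 : ∃ m', IsQFunc X m' (fun y p => deriv^[u+1] c y * g y p) :=
        ⟨m, isQFunc_xmul (iterderiv_contDiffOn hXo hc (u+1)) hm⟩
      have he : Eq2 X (fun y p => deriv^[u] c y * Dop g y p)
          (fun y p => (1:ℝ) * Dop (fun y' p' => deriv^[u] c y' * g y' p') y p
            + (-1:ℝ) * (fun y' p' => deriv^[u+1] c y' * g y' p') y p) := by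
        intro y hy p hp
        show deriv^[u] c y * Dop g y p
          = 1 * Dop (fun y' p' => deriv^[u] c y' * g y' p') y p
            + -1 * (deriv^[u+1] c y * g y p)
        rw [Dop_xmul hXo hcu hm y hy p hp]
        rw [← Function.iterate_succ_apply' deriv u c]
        ring
      rw [Dop_iter_congr hXo (s-u) he x hx q hq]
      rw [Dop_iter_lin2 hXo (s-u) 1 (-1) hQ1 hQ2 x hx q hq]
      beta_reduce
      rw [← Function.iterate_succ_apply Dop (s-u)]
      rw [show (s - u).succ = s + 1 - u from by have := Finset.mem_range.mp hu; omega]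
      ring
    refine (Finset.sum_congr rfl hterm).trans ?_
    exact (sum_pascal_aux s
      (fun u => Dop^[s+1-u] (fun y p => deriv^[u] c y * g y p) x q)
      (fun u => Dop^[s-u] (fun y p => deriv^[u+1] c y * g y p) x q)
      (fun u => by simp only [Nat.succ_sub_succ_eq_sub])).symm


def Aop (α : ℝ → ℝ) (g : QFun) : QFun := fun y p => α y * Dop g y p

lemma qf_Aop_iter (hXo : IsOpen X) {α : ℝ → ℝ} (hα : ContDiffOn ℝ (⊤ : ℕ∞) α X) {n : ℕ} {f : QFun}
    (hf : IsQFunc X n f) : ∀ k : ℕ, ∃ m, IsQFunc X m ((Aop α)^[k] (fun y p => α y * f y p)) := by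
  intro k
  induction k with
  | zero => exact ⟨n, isQFunc_xmul hα hf⟩
  | succ k ih =>
    obtain ⟨m, hm⟩ := ih
    rw [Function.iterate_succ_apply']
    exact ⟨m+1, isQFunc_xmul hα (qf_dop hXo hm)⟩

lemma P1 (hXo : IsOpen X) {α : ℝ → ℝ} (hα : ContDiffOn ℝ (⊤ : ℕ∞) α X) {n : ℕ} {f : QFun}
    (hf : IsQFunc X n f) :
    ∀ k : ℕ, ∀ x ∈ X, ∀ q : ℕ → ℝ, 0 < q 0 →
    (Aop α)^[k] (fun y p => α y * f y p) x q
      = ∑ r ∈ Finset.range (k+1),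
          (-1:ℝ)^(k-r) * Dop^[r] (fun y p => bcoef α k (r:ℤ) y * f y p) x q := by
  intro k
  induction k with
  | zero =>
    intro x hx q hq
    rw [Finset.sum_range_one]
    have hb : bcoef α 0 ((0:ℕ):ℤ) = α := by norm_num [bcoef]
    rw [hb]
    norm_num
  | succ k ih =>
    intro x hx q hq
    rw [Function.iterate_succ_apply']
    show α x * Dop ((Aop α)^[k] (fun y p => α y * f y p)) x q = _
    have hQbf : ∀ r : ℤ, IsQFunc X n (fun y p => bcoef α k r y * f y p) := fun r =>
      isQFunc_xmul (bcoef_contDiffOn hXo hα k r) hf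
    have hIH : Eq2 X ((Aop α)^[k] (fun y p => α y * f y p))
        (fun x q => ∑ r ∈ Finset.range (k+1),
          (-1:ℝ)^(k-r) * Dop^[r] (fun y p => bcoef α k (r:ℤ) y * f y p) x q) :=
      fun x hx q hq => ih x hx q hq
    rw [Dop_congr hXo hIH x hx q hq]
    rw [Dop_sum hXo (Finset.range (k+1)) (fun r => (-1:ℝ)^(k-r))
      (fun r => Dop^[r] (fun y p => bcoef α k (r:ℤ) y * f y p))
      (fun r _ => qf_iter hXo r ⟨n, hQbf (r:ℤ)⟩) x hx q hq]
    rw [Finset.mul_sum]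
    -- per-r reduction
    have hper : ∀ r ∈ Finset.range (k+1),
        α x * ((-1:ℝ)^(k-r) * Dop (Dop^[r] (fun y p => bcoef α k (r:ℤ) y * f y p)) x q)
        = ∑ t ∈ Finset.range (k+2), (-1:ℝ)^(k+1-t) * (((r+1).choose t : ℕ) : ℝ) *
            Dop^[t] (fun y p => deriv^[r+1-t] α y * (bcoef α k (r:ℤ) y * f y p)) x q := by
      intro r hr
      have hrk : r < k + 1 := Finset.mem_range.mp hr
      have hit : Dop (Dop^[r] (fun y p => bcoef α k (r:ℤ) y * f y p))
          = Dop^[r+1] (fun y p => bcoef α k (r:ℤ) y * f y p) :=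
        (Function.iterate_succ_apply' Dop r _).symm
      -- inv_leibniz
      have hil := inv_leibniz hXo hα (r+1) ⟨n, hQbf (r:ℤ)⟩ x hx q hq
      -- restrict RHS to range (r+2)
      have hres : ∑ t ∈ Finset.range (k+2), (-1:ℝ)^(k+1-t) * (((r+1).choose t : ℕ) : ℝ) *
            Dop^[t] (fun y p => deriv^[r+1-t] α y * (bcoef α k (r:ℤ) y * f y p)) x q
          = ∑ t ∈ Finset.range (r+2), (-1:ℝ)^(k+1-t) * (((r+1).choose t : ℕ) : ℝ) *
            Dop^[t] (fun y p => deriv^[r+1-t] α y * (bcoef α k (r:ℤ) y * f y p)) x q := by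
      -- sum over bigger range equals smaller: extra terms vanish
        refine (Finset.sum_subset (by
          intro t ht
          simp only [Finset.mem_range] at ht ⊢
          omega) (fun t _ ht => ?_)).symm
        have hz : (r+1).choose t = 0 :=
          Nat.choose_eq_zero_of_lt (by simp only [Finset.mem_range] at ht; omega)
        rw [hz]
        norm_num
      have hrefl := Finset.sum_range_reflect (fun t => (-1:ℝ)^(k+1-t) * (((r+1).choose t : ℕ) : ℝ) *
            Dop^[t] (fun y p => deriv^[r+1-t] α y * (bcoef α k (r:ℤ) y * f y p)) x q) (r+2)
      rw [hit, mul_left_comm, hil, hres, ← hrefl, Finset.mul_sum]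
      refine Finset.sum_congr rfl fun u hu => ?_
      have hur : u < r + 2 := Finset.mem_range.mp hu
      rw [show r + 2 - 1 - u = r + 1 - u from by omega]
      rw [show k + 1 - (r + 1 - u) = (k - r) + u from by omega]
      rw [show r + 1 - (r + 1 - u) = u from by omega]
      rw [show (r+1).choose (r+1-u) = (r+1).choose u from Nat.choose_symm (by omega)]
      rw [pow_add]
      ring
    rw [Finset.sum_congr rfl hper]
    -- swap the double sum
    rw [Finset.sum_comm]
    -- per-t folding
    refine Finset.sum_congr rfl fun t ht => ?_
    have htk : t < k + 2 := Finset.mem_range.mp ht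
    have hfold : ∑ r ∈ Finset.range (k+1), (-1:ℝ)^(k+1-t) * (((r+1).choose t : ℕ) : ℝ) *
          Dop^[t] (fun y p => deriv^[r+1-t] α y * (bcoef α k (r:ℤ) y * f y p)) x q
        = (-1:ℝ)^(k+1-t) * ∑ r ∈ Finset.range (k+1), (((r+1).choose t : ℕ) : ℝ) *
            Dop^[t] (fun y p => deriv^[r+1-t] α y * (bcoef α k (r:ℤ) y * f y p)) x q := by
      rw [Finset.mul_sum]
      exact Finset.sum_congr rfl fun r _ => by ring
    rw [hfold]
    have hsum := Dop_iter_sum hXo t (Finset.range (k+1))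
      (fun r => (((r+1).choose t : ℕ) : ℝ))
      (fun r => fun y p => deriv^[r+1-t] α y * (bcoef α k (r:ℤ) y * f y p))
      (fun r _ => ⟨n, isQFunc_xmul (iterderiv_contDiffOn hXo hα (r+1-t))
        (isQFunc_xmul (bcoef_contDiffOn hXo hα k (r:ℤ)) hf)⟩)
    -- identify with bcoef (k+1) via coeff_identity
    have hEq : Eq2 X (fun y p => ∑ r ∈ Finset.range (k+1), (((r+1).choose t : ℕ) : ℝ) *
          (deriv^[r+1-t] α y * (bcoef α k (r:ℤ) y * f y p)))
        (fun y p => bcoef α (k+1) (t:ℤ) y * f y p) := by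
      intro y hy p hp
      show ∑ r ∈ Finset.range (k+1), (((r+1).choose t : ℕ) : ℝ) *
          (deriv^[r+1-t] α y * (bcoef α k (r:ℤ) y * f y p))
        = bcoef α (k+1) (t:ℤ) y * f y p
      rw [coeff_identity hXo hα k t y hy, Finset.sum_mul]
      exact Finset.sum_congr rfl fun r _ => by ring
    exact congrArg (fun z => (-1:ℝ)^(k+1-t) * z)
      ((hsum x hx q hq).symm.trans (Dop_iter_congr hXo t hEq x hx q hq))

lemma P2 (hXo : IsOpen X) {α : ℝ → ℝ} (hα : ContDiffOn ℝ (⊤ : ℕ∞) α X) {n : ℕ} {f : QFun}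
    (hf : IsQFunc X n f) :
    ∀ (j r m : ℕ), r + 1 + j = m → ∀ x ∈ X, ∀ q : ℕ → ℝ, 0 < q 0 →
    ∑ k ∈ Finset.Icc (r+1) m,
        (-1:ℝ)^(k-1-r) * Dop^[k-1-r] (fun y p => bcoef α m (k:ℤ) y * f y p) x q
      = ∑ k ∈ Finset.Icc r (m-1),
          (-1:ℝ)^(m-1-k) * bcoef α k (r:ℤ) x *
            ((Aop α)^[m-1-k] (fun y p => α y * f y p)) x q := by
  intro j
  induction j with
  | zero =>
    intro r m hm x hx q hq
    obtain rfl : m = r + 1 := by omega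
    rw [show r+1-1 = r from by omega]
    rw [Finset.Icc_self, Finset.Icc_self, Finset.sum_singleton, Finset.sum_singleton]
    rw [show r+1-1-r = 0 from by omega, show r - r = 0 from by omega]
    simp only [pow_zero, Function.iterate_zero_apply, one_mul]
    have hb : bcoef α (r+1) ((r+1:ℕ):ℤ) x = α x * bcoef α r ((r:ℕ):ℤ) x := by
      show α x * (deriv (bcoef α r ((r+1:ℕ):ℤ)) x + bcoef α r (((r+1:ℕ):ℤ)-1) x) = _
      rw [bcoef_zero α r ((r+1:ℕ):ℤ) (by push_cast; omega)]
      rw [show (((r+1:ℕ)):ℤ)-1 = ((r:ℕ):ℤ) from by push_cast; ring]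
      simp
    rw [hb]
    show α x * bcoef α r ((r:ℕ):ℤ) x * f x q = bcoef α r ((r:ℕ):ℤ) x * (α x * f x q)
    ring
  | succ j ihj =>
    intro r m hm x hx q hq
    have hm2 : m = r + j + 2 := by omega
    have hr1m : (r+1) + 1 + j = m := by omega
    -- peel the bottom element of the LHS sum
    have hpeel : Finset.Icc (r+1) m = insert (r+1) (Finset.Icc (r+1+1) m) := by
      ext z
      simp only [Finset.mem_Icc, Finset.mem_insert]
      omega
    rw [hpeel, Finset.sum_insert (by simp only [Finset.mem_Icc]; omega)]
    rw [show r+1-1-r = 0 from by omega]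
    simp only [pow_zero, Function.iterate_zero_apply, one_mul]
    -- Step B : rest = - Dop ( IH-LHS function ) and apply IH
    have hQbmf : ∀ k : ℕ, ∃ mm, IsQFunc X mm (fun y p => bcoef α m (k:ℤ) y * f y p) :=
      fun k => ⟨n, isQFunc_xmul (bcoef_contDiffOn hXo hα m _) hf⟩
    have hrest : ∑ k ∈ Finset.Icc (r+1+1) m,
          (-1:ℝ)^(k-1-r) * Dop^[k-1-r] (fun y p => bcoef α m (k:ℤ) y * f y p) x q
        = - Dop (fun y p => ∑ k ∈ Finset.Icc (r+1+1) m,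
            (-1:ℝ)^(k-1-(r+1)) *
              Dop^[k-1-(r+1)] (fun y' p' => bcoef α m (k:ℤ) y' * f y' p') y p) x q := by
      rw [Dop_sum hXo (Finset.Icc (r+1+1) m) (fun k => (-1:ℝ)^(k-1-(r+1)))
        (fun k => Dop^[k-1-(r+1)] (fun y' p' => bcoef α m (k:ℤ) y' * f y' p'))
        (fun k _ => qf_iter hXo _ (hQbmf k)) x hx q hq]
      rw [← Finset.sum_neg_distrib]
      refine Finset.sum_congr rfl fun k hk => ?_
      have hk2 : r+1+1 ≤ k ∧ k ≤ m := by simpa [Finset.mem_Icc] using hk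
      have hit : Dop^[k-1-r] (fun y p => bcoef α m (k:ℤ) y * f y p)
          = Dop (Dop^[k-1-(r+1)] (fun y p => bcoef α m (k:ℤ) y * f y p)) := by
        rw [show k-1-r = (k-1-(r+1)) + 1 from by omega, Function.iterate_succ_apply']
      rw [hit, show k-1-r = (k-1-(r+1)) + 1 from by omega, pow_succ]
      ring
    rw [hrest]
    -- apply the induction hypothesis inside Dop
    have hIH : Eq2 X (fun y p => ∑ k ∈ Finset.Icc (r+1+1) m,
          (-1:ℝ)^(k-1-(r+1)) *
            Dop^[k-1-(r+1)] (fun y' p' => bcoef α m (k:ℤ) y' * f y' p') y p)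
        (fun y p => ∑ k ∈ Finset.Icc (r+1) (m-1),
          (-1:ℝ)^(m-1-k) * (bcoef α k ((r+1:ℕ):ℤ) y *
            ((Aop α)^[m-1-k] (fun y' p' => α y' * f y' p')) y p)) := by
      intro y hy p hp
      beta_reduce
      rw [ihj (r+1) m hr1m y hy p hp]
      exact Finset.sum_congr rfl fun k _ => by ring
    rw [Dop_congr hXo hIH x hx q hq]
    -- expand Dop of the sum, using the product rule
    have hDT : Dop (fun y p => ∑ k ∈ Finset.Icc (r+1) (m-1),
          (-1:ℝ)^(m-1-k) * (bcoef α k ((r+1:ℕ):ℤ) y *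
            ((Aop α)^[m-1-k] (fun y' p' => α y' * f y' p')) y p)) x q
        = ∑ k ∈ Finset.Icc (r+1) (m-1), (-1:ℝ)^(m-1-k) *
            (deriv (bcoef α k ((r+1:ℕ):ℤ)) x *
                ((Aop α)^[m-1-k] (fun y' p' => α y' * f y' p')) x q
              + bcoef α k ((r+1:ℕ):ℤ) x *
                Dop ((Aop α)^[m-1-k] (fun y' p' => α y' * f y' p')) x q) := by
      rw [Dop_sum hXo (Finset.Icc (r+1) (m-1)) (fun k => (-1:ℝ)^(m-1-k))
        (fun k => fun y p => bcoef α k ((r+1:ℕ):ℤ) y *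
          ((Aop α)^[m-1-k] (fun y' p' => α y' * f y' p')) y p)
        (fun k _ => by
          obtain ⟨mm, hmm⟩ := qf_Aop_iter hXo hα hf (m-1-k)
          exact ⟨mm, isQFunc_xmul (bcoef_contDiffOn hXo hα k _) hmm⟩) x hx q hq]
      refine Finset.sum_congr rfl fun k _ => ?_
      obtain ⟨mm, hmm⟩ := qf_Aop_iter hXo hα hf (m-1-k)
      rw [Dop_xmul hXo (bcoef_contDiffOn hXo hα k _) hmm x hx q hq]
    rw [hDT]
    -- Step C : the final algebraic identity
    have key : (∑ k ∈ Finset.Icc r (m-1),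
          (-1:ℝ)^(m-1-k) * bcoef α k (r:ℤ) x *
            ((Aop α)^[m-1-k] (fun y p => α y * f y p)) x q)
        + (∑ k ∈ Finset.Icc (r+1) (m-1), (-1:ℝ)^(m-1-k) *
            (deriv (bcoef α k ((r+1:ℕ):ℤ)) x *
                ((Aop α)^[m-1-k] (fun y' p' => α y' * f y' p')) x q
              + bcoef α k ((r+1:ℕ):ℤ) x *
                Dop ((Aop α)^[m-1-k] (fun y' p' => α y' * f y' p')) x q))
        = bcoef α m ((r+1:ℕ):ℤ) x * f x q := by
      -- convert to range sums
      have e1 : (∑ k ∈ Finset.Icc r (m-1),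
            (-1:ℝ)^(m-1-k) * bcoef α k (r:ℤ) x *
              ((Aop α)^[m-1-k] (fun y p => α y * f y p)) x q)
          = ∑ i ∈ Finset.range (j+2), (-1:ℝ)^(j+1-i) *
              (bcoef α (r+i) (r:ℤ) x *
                ((Aop α)^[j+1-i] (fun y p => α y * f y p)) x q) := by
        rw [← Finset.Ico_add_one_right_eq_Icc, Finset.sum_Ico_eq_sum_range,
          show m-1+1-r = j+2 from by omega]
        refine Finset.sum_congr rfl fun i hi => ?_
        rw [show m-1-(r+i) = j+1-i from by omega]
        ring
      have e2 : (∑ k ∈ Finset.Icc (r+1) (m-1), (-1:ℝ)^(m-1-k) *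
            (deriv (bcoef α k ((r+1:ℕ):ℤ)) x *
                ((Aop α)^[m-1-k] (fun y' p' => α y' * f y' p')) x q
              + bcoef α k ((r+1:ℕ):ℤ) x *
                Dop ((Aop α)^[m-1-k] (fun y' p' => α y' * f y' p')) x q))
          = ∑ i ∈ Finset.range (j+1), ((-1:ℝ)^(j-i) *
              (deriv (bcoef α (r+1+i) ((r+1:ℕ):ℤ)) x *
                ((Aop α)^[j-i] (fun y' p' => α y' * f y' p')) x q)
            + (-1:ℝ)^(j-i) *
                (bcoef α (r+1+i) ((r+1:ℕ):ℤ) x *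
                  Dop ((Aop α)^[j-i] (fun y' p' => α y' * f y' p')) x q)) := by
        rw [← Finset.Ico_add_one_right_eq_Icc, Finset.sum_Ico_eq_sum_range,
          show m-1+1-(r+1) = j+1 from by omega]
        refine Finset.sum_congr rfl fun i hi => ?_
        rw [show m-1-(r+1+i) = j-i from by omega]
        ring
      rw [e1, e2, Finset.sum_add_distrib]
      -- absorb the deriv-part into the long sum
      have e3 : (∑ i ∈ Finset.range (j+1), (-1:ℝ)^(j-i) *
            (deriv (bcoef α (r+1+i) ((r+1:ℕ):ℤ)) x *
              ((Aop α)^[j-i] (fun y' p' => α y' * f y' p')) x q))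
          = ∑ i ∈ Finset.range (j+2), (-1:ℝ)^(j+1-i) *
              (deriv (bcoef α (r+i) ((r+1:ℕ):ℤ)) x *
                ((Aop α)^[j+1-i] (fun y p => α y * f y p)) x q) := by
        rw [Finset.sum_range_succ' (fun i => (-1:ℝ)^(j+1-i) *
          (deriv (bcoef α (r+i) ((r+1:ℕ):ℤ)) x *
            ((Aop α)^[j+1-i] (fun y p => α y * f y p)) x q)) (j+1)]
        have h0 : deriv (bcoef α (r+0) ((r+1:ℕ):ℤ)) x = 0 := by
          rw [bcoef_zero α (r+0) ((r+1:ℕ):ℤ) (by push_cast; omega)]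
          simp
        rw [h0]
        rw [Finset.sum_congr rfl (fun i (hi : i ∈ Finset.range (j+1)) => by
          rw [show j+1-(i+1) = j-i from by omega, show r+(i+1) = r+1+i from by omega] :
            ∀ i ∈ Finset.range (j+1), (-1:ℝ)^(j+1-(i+1)) *
              (deriv (bcoef α (r+(i+1)) ((r+1:ℕ):ℤ)) x *
                ((Aop α)^[j+1-(i+1)] (fun y p => α y * f y p)) x q)
            = (-1:ℝ)^(j-i) * (deriv (bcoef α (r+1+i) ((r+1:ℕ):ℤ)) x *
                ((Aop α)^[j-i] (fun y p => α y * f y p)) x q))]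
        ring
      rw [e3, ← add_assoc, ← Finset.sum_add_distrib]
      -- combined long sum
      have e4 : ∀ i ∈ Finset.range (j+2),
          (-1:ℝ)^(j+1-i) * (bcoef α (r+i) (r:ℤ) x *
              ((Aop α)^[j+1-i] (fun y p => α y * f y p)) x q)
            + (-1:ℝ)^(j+1-i) * (deriv (bcoef α (r+i) ((r+1:ℕ):ℤ)) x *
              ((Aop α)^[j+1-i] (fun y p => α y * f y p)) x q)
          = (-1:ℝ)^(j+1-i) * ((bcoef α (r+i) (r:ℤ) x
              + deriv (bcoef α (r+i) ((r+1:ℕ):ℤ)) x) *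
              ((Aop α)^[j+1-i] (fun y p => α y * f y p)) x q) := fun i _ => by ring
      rw [Finset.sum_congr rfl e4]
      -- peel the top term i = j+1
      rw [Finset.sum_range_succ]
      have etop : (-1:ℝ)^(j+1-(j+1)) * ((bcoef α (r+(j+1)) (r:ℤ) x
            + deriv (bcoef α (r+(j+1)) ((r+1:ℕ):ℤ)) x) *
            ((Aop α)^[j+1-(j+1)] (fun y p => α y * f y p)) x q)
          = bcoef α m ((r+1:ℕ):ℤ) x * f x q := by
        rw [show j+1-(j+1) = 0 from by omega]
        simp only [pow_zero, Function.iterate_zero_apply, one_mul]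
        have hrec : bcoef α m ((r+1:ℕ):ℤ) x
            = α x * (deriv (bcoef α (r+j+1) ((r+1:ℕ):ℤ)) x
                + bcoef α (r+j+1) (((r+1:ℕ):ℤ)-1) x) := by
          rw [show m = (r+j+1)+1 from by omega]
          rfl
        rw [hrec, show (((r+1:ℕ)):ℤ)-1 = ((r:ℕ):ℤ) from by push_cast; ring,
          show r+(j+1) = r+j+1 from by omega]
        show (bcoef α (r+j+1) (r:ℤ) x + deriv (bcoef α (r+j+1) ((r+1:ℕ):ℤ)) x)
            * (α x * f x q) = _
        ring
      rw [etop]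
      -- remaining part of long sum cancels the Dop-part
      have e5 : ∀ i ∈ Finset.range (j+1),
          (-1:ℝ)^(j+1-i) * ((bcoef α (r+i) (r:ℤ) x
              + deriv (bcoef α (r+i) ((r+1:ℕ):ℤ)) x) *
              ((Aop α)^[j+1-i] (fun y p => α y * f y p)) x q)
          = - ((-1:ℝ)^(j-i) * (bcoef α (r+1+i) ((r+1:ℕ):ℤ) x *
              Dop ((Aop α)^[j-i] (fun y' p' => α y' * f y' p')) x q)) := by
        intro i hi
        have hij : i < j + 1 := Finset.mem_range.mp hi
        have hiter : ((Aop α)^[j+1-i] (fun y p => α y * f y p)) x q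
            = α x * Dop ((Aop α)^[j-i] (fun y p => α y * f y p)) x q := by
          rw [show j+1-i = (j-i)+1 from by omega, Function.iterate_succ_apply']
          rfl
        have hrec2 : bcoef α (r+1+i) ((r+1:ℕ):ℤ) x
            = α x * (deriv (bcoef α (r+i) ((r+1:ℕ):ℤ)) x + bcoef α (r+i) (r:ℤ) x) := by
          rw [show r+1+i = (r+i)+1 from by omega]
          show α x * (deriv (bcoef α (r+i) ((r+1:ℕ):ℤ)) x
              + bcoef α (r+i) (((r+1:ℕ):ℤ)-1) x) = _
          rw [show (((r+1:ℕ)):ℤ)-1 = ((r:ℕ):ℤ) from by push_cast; ring]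
        rw [hiter, hrec2, show j+1-i = (j-i)+1 from by omega, pow_succ]
        ring
      rw [Finset.sum_congr rfl e5, Finset.sum_neg_distrib]
      ring
    linarith [key]

lemma a_eq_b (hXo : IsOpen X) {α : ℝ → ℝ} (a : ℕ → ℤ → ℝ → ℝ)
    (ha00 : ∀ x ∈ X, a 0 0 x = α x)
    (hzero : ∀ (k : ℕ) (r : ℤ), ¬ (0 ≤ r ∧ r ≤ (k : ℤ)) → ∀ x ∈ X, a k r x = 0)
    (hrec : ∀ (k : ℕ) (r : ℤ), ∀ x ∈ X,
      a (k + 1) r x = α x * (deriv (a k r) x + a k (r - 1) x)) :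
    ∀ (k : ℕ) (r : ℤ), ∀ x ∈ X, a k r x = bcoef α k r x := by
  intro k
  induction k with
  | zero =>
    intro r x hx
    by_cases h : r = 0
    · subst h
      rw [ha00 x hx]
      simp [bcoef]
    · rw [hzero 0 r (by omega) x hx]
      simp [bcoef, h]
  | succ k ih =>
    intro r x hx
    rw [hrec k r x hx]
    show _ = α x * (deriv (bcoef α k r) x + bcoef α k (r-1) x)
    have hd : deriv (a k r) x = deriv (bcoef α k r) x := by
      apply Filter.EventuallyEq.deriv_eq
      filter_upwards [hXo.mem_nhds hx] with t ht
      exact ih r t ht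
    rw [hd, ih (r-1) x hx]

end S19

/-- Transformation coefficients: with `a₀₀ = α`, `a_{kr} = 0`
unless `0 ≤ r ≤ k`, and `a_{k+1,r} = α (a_{kr}' + a_{k,r-1})`, one has
`(αD)^k (α ⬝ f) = Σ_{r=0}^k (-1)^{k-r} D^r (a_{kr} ⬝ f)`, and, for `m ≥ r + 1`,
`Σ_{k=r+1}^m (-1)^{k-1-r} D^{k-1-r} (a_{mk} ⬝ f)
  = Σ_{k=r}^{m-1} (-1)^{m-1-k} a_{kr} ⬝ (αD)^{m-1-k} (α ⬝ f)`. -/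
theorem stmt19 (X : Set ℝ) (hX : IsOpenInterval X)
    (α : ℝ → ℝ) (hα : ContDiffOn ℝ (⊤ : ℕ∞) α X)
    (a : ℕ → ℤ → ℝ → ℝ)
    (ha00 : ∀ x ∈ X, a 0 0 x = α x)
    (hzero : ∀ (k : ℕ) (r : ℤ), ¬ (0 ≤ r ∧ r ≤ (k : ℤ)) → ∀ x ∈ X, a k r x = 0)
    (hrec : ∀ (k : ℕ) (r : ℤ), ∀ x ∈ X,
      a (k + 1) r x = α x * (deriv (a k r) x + a k (r - 1) x))
    (n : ℕ) (f : QFun) (hf : IsQFunc X n f) :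
    (∀ k : ℕ, ∀ x ∈ X, ∀ q : ℕ → ℝ, 0 < q 0 →
      (fun g : QFun => fun y p => α y * Dop g y p)^[k] (fun y p => α y * f y p) x q
        = ∑ r ∈ Finset.range (k + 1),
            (-1 : ℝ) ^ (k - r) * Dop^[r] (fun y p => a k (r : ℤ) y * f y p) x q) ∧
    (∀ r m : ℕ, r + 1 ≤ m → ∀ x ∈ X, ∀ q : ℕ → ℝ, 0 < q 0 →
      ∑ k ∈ Finset.Icc (r + 1) m,
          (-1 : ℝ) ^ (k - 1 - r) * Dop^[k - 1 - r] (fun y p => a m (k : ℤ) y * f y p) x q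
        = ∑ k ∈ Finset.Icc r (m - 1),
            (-1 : ℝ) ^ (m - 1 - k) * a k (r : ℤ) x *
              ((fun g : QFun => fun y p => α y * Dop g y p)^[m - 1 - k]
                (fun y p => α y * f y p)) x q) := by
  obtain ⟨hXo, -, -⟩ := hX
  have hab : ∀ (k : ℕ) (r : ℤ), ∀ x ∈ X, a k r x = S19.bcoef α k r x :=
    S19.a_eq_b hXo a ha00 hzero hrec
  constructor
  · intro k x hx q hq
    have h1 : (fun g : QFun => fun y p => α y * Dop g y p)^[k] (fun y p => α y * f y p) x q
        = (S19.Aop α)^[k] (fun y p => α y * f y p) x q := rfl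
    rw [h1, S19.P1 hXo hα hf k x hx q hq]
    refine Finset.sum_congr rfl fun r hr => ?_
    have he : S19.Eq2 X (fun y p => S19.bcoef α k (r:ℤ) y * f y p)
        (fun y p => a k (r:ℤ) y * f y p) :=
      fun y hy p hp => by beta_reduce; rw [hab k (r:ℤ) y hy]
    rw [S19.Dop_iter_congr hXo r he x hx q hq]
  · intro r m hrm x hx q hq
    have h2 := S19.P2 hXo hα hf (m - (r+1)) r m (by omega) x hx q hq
    have hL : ∑ k ∈ Finset.Icc (r+1) m,
          (-1:ℝ)^(k-1-r) * Dop^[k-1-r] (fun y p => a m (k:ℤ) y * f y p) x q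
        = ∑ k ∈ Finset.Icc (r+1) m,
          (-1:ℝ)^(k-1-r) * Dop^[k-1-r] (fun y p => S19.bcoef α m (k:ℤ) y * f y p) x q := by
      refine Finset.sum_congr rfl fun k _ => ?_
      have he : S19.Eq2 X (fun y p => a m (k:ℤ) y * f y p)
          (fun y p => S19.bcoef α m (k:ℤ) y * f y p) :=
        fun y hy p hp => by beta_reduce; rw [hab m (k:ℤ) y hy]
      rw [S19.Dop_iter_congr hXo (k-1-r) he x hx q hq]
    rw [hL, h2]
    refine Finset.sum_congr rfl fun k _ => ?_
    rw [hab k (r:ℤ) x hx]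
    rfl

end
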